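/- Let G be a connected finite simple graph, α an ordering of G, and ({x},Y) an α-consecutive pair such that x has a neighbor z of degree 1 with α(z) > α(y) for all y ∈ Y. If |E^l_α(Y)| ≥ |E^r_α(Y)|, then the ordering β = swap_{Y,{x}}(α) satisfies prf_β(G) ≤ prf_α(G). -/

import Mathlib

variable {V : Type*}

/-- The minimum position (in ordering `α`) over the closed neighborhood of `z`. -/
noncomputable def nbhdMin {n : ℕ} (G : SimpleGraph V) (α : V ≃ Fin n) (z : V) : ℕ :=
  sInf {m : ℕ | ∃ w, (w = z ∨ G.Adj w z) ∧ (α w : ℕ) = m}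

/-- The profile of a vertex `z` in the ordering `α`. -/
noncomputable def vtxProfile {n : ℕ} (G : SimpleGraph V) (α : V ≃ Fin n) (z : V) : ℕ :=
  (α z : ℕ) - nbhdMin G α z

/-- The profile of an ordering `α` of `G`. -/
noncomputable def ordProfile [Fintype V] {n : ℕ} (G : SimpleGraph V) (α : V ≃ Fin n) : ℕ :=
  ∑ z : V, vtxProfile G α z

/-- The profile of a graph `G`. -/
noncomputable def profile (G : SimpleGraph V) [Fintype V] : ℕ :=
  sInf {p : ℕ | ∃ α : V ≃ Fin (Fintype.card V), ordProfile G α = p}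
/-- The edge `uv` belongs to `E_α(G)`: it is an edge and one endpoint realizes the minimum
position over the closed neighborhood of the other. -/
noncomputable def memEalpha {n : ℕ} (G : SimpleGraph V) (α : V ≃ Fin n) (u v : V) : Prop :=
  G.Adj u v ∧ ((α u : ℕ) = nbhdMin G α v ∨ (α v : ℕ) = nbhdMin G α u)

/-- `E^r_α(X)`: edges `uv ∈ E_α(G)` with `u ∈ X`, `v ∉ X` and `α(u) < α(v)`. -/
noncomputable def Eright {n : ℕ} (G : SimpleGraph V) (α : V ≃ Fin n) (X : Set V) :
    Set (V × V) :=
  {p | memEalpha G α p.1 p.2 ∧ p.1 ∈ X ∧ p.2 ∉ X ∧ (α p.1 : ℕ) < (α p.2 : ℕ)}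

/-- `E^l_α(X)`: edges `uv ∈ E_α(G)` with `u ∈ X`, `v ∉ X` and `α(u) > α(v)`. -/
noncomputable def Eleft {n : ℕ} (G : SimpleGraph V) (α : V ≃ Fin n) (X : Set V) :
    Set (V × V) :=
  {p | memEalpha G α p.1 p.2 ∧ p.1 ∈ X ∧ p.2 ∉ X ∧ (α p.2 : ℕ) < (α p.1 : ℕ)}

/-- `(X, Y)` is an `α`-consecutive pair: there are `1 ≤ a < b < c ≤ n` (here written with
`0`-based positions) such that `X` occupies positions `a, …, b-1` and `Y` positions `b, …, c`. -/
def ConsecPair {n : ℕ} (α : V ≃ Fin n) (X Y : Set V) : Prop :=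
  ∃ a b c : ℕ, a < b ∧ b < c ∧ c < n ∧
    (∀ v : V, v ∈ X ↔ a ≤ (α v : ℕ) ∧ (α v : ℕ) < b) ∧
    (∀ v : V, v ∈ Y ↔ b ≤ (α v : ℕ) ∧ (α v : ℕ) ≤ c)

/-- `β = swap_{Y,X}(α)`: the ordering obtained from `α` by swapping the consecutive blocks
`X` and `Y` (so that `Y` comes first), keeping the relative order inside each block and
fixing all other vertices. -/
def IsSwap {n : ℕ} (α β : V ≃ Fin n) (X Y : Set V) : Prop :=
  (∀ v : V, v ∉ X → v ∉ Y → β v = α v) ∧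
  (∀ u v : V, u ∈ X → v ∈ X → (β u < β v ↔ α u < α v)) ∧
  (∀ u v : V, u ∈ Y → v ∈ Y → (β u < β v ↔ α u < α v)) ∧
  (∀ y ∈ Y, ∀ x ∈ X, β y < β x)

lemma nbhdMin_le {n : ℕ} (G : SimpleGraph V) (α : V ≃ Fin n) (z w : V)
    (h : w = z ∨ G.Adj w z) : nbhdMin G α z ≤ (α w : ℕ) :=
  Nat.sInf_le ⟨w, h, rfl⟩

lemma nbhdMin_spec {n : ℕ} (G : SimpleGraph V) (α : V ≃ Fin n) (z : V) :
    ∃ w, (w = z ∨ G.Adj w z) ∧ (α w : ℕ) = nbhdMin G α z :=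
  Nat.sInf_mem (⟨(α z : ℕ), z, Or.inl rfl, rfl⟩ :
    {m : ℕ | ∃ w, (w = z ∨ G.Adj w z) ∧ (α w : ℕ) = m}.Nonempty)

lemma nbhdMin_le_self {n : ℕ} (G : SimpleGraph V) (α : V ≃ Fin n) (z : V) :
    nbhdMin G α z ≤ (α z : ℕ) := nbhdMin_le G α z z (Or.inl rfl)

lemma vtxProfile_cast {n : ℕ} (G : SimpleGraph V) (α : V ≃ Fin n) (z : V) :
    (vtxProfile G α z : ℤ) = ((α z : ℕ) : ℤ) - (nbhdMin G α z : ℤ) := by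
  rw [vtxProfile, Nat.cast_sub (nbhdMin_le_self G α z)]

/-- Lemma 3.2: swapping an `α`-consecutive pair `({x}, Y)`, where `x` has a degree-one
neighbor `z` placed after all of `Y`, does not increase the profile, provided
`|E^l_α(Y)| ≥ |E^r_α(Y)|`. -/
theorem swap_singleton_profile_le [Fintype V] (G : SimpleGraph V) (hG : G.Connected)
    (α β : V ≃ Fin (Fintype.card V)) (x z : V) (Y : Set V)
    (hpair : ConsecPair α {x} Y)
    (hz : G.Adj x z) (hzdeg : (G.neighborSet z).ncard = 1)
    (hzafter : ∀ y ∈ Y, α y < α z)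
    (hY : (Eright G α Y).ncard ≤ (Eleft G α Y).ncard)
    (hswap : IsSwap α β {x} Y) :
    ordProfile G β ≤ ordProfile G α := by
  classical
  obtain ⟨a, b, c, hab, hbc, hcn, hXc, hYc⟩ := hpair
  obtain ⟨hfix, -, hYmono, hYX⟩ := hswap
  have han : a < Fintype.card V := by omega
  have hva : (α.symm ⟨a, han⟩ : V) = x := by
    have := (hXc (α.symm ⟨a, han⟩)).mpr (by simp; omega)
    simpa using this
  have hxa : (α x : ℕ) = a := by rw [← hva]; simp
  have hb : b = a + 1 := by
    have hbn : b - 1 < Fintype.card V := by omega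
    have hvb : (α.symm ⟨b - 1, hbn⟩ : V) = x := by
      have := (hXc (α.symm ⟨b - 1, hbn⟩)).mpr (by simp; omega)
      simpa using this
    have : (α x : ℕ) = b - 1 := by rw [← hvb]; simp
    omega
  subst hb
  have hsurjY : ∀ p : ℕ, a + 1 ≤ p → p ≤ c → ∃ y ∈ Y, (α y : ℕ) = p := by
    intro p h1 h2
    have hpn : p < Fintype.card V := by omega
    exact ⟨α.symm ⟨p, hpn⟩, (hYc _).mpr (by simp; omega), by simp⟩
  have hxY : x ∉ Y := by rw [hYc]; omega
  have hβfix : ∀ v, v ∉ Y → v ≠ x → β v = α v := fun v h1 h2 =>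
    hfix v (by simpa using h2) h1
  have hβmem : ∀ s, s ∈ Y ∨ s = x → a ≤ (β s : ℕ) ∧ (β s : ℕ) ≤ c := by
    intro s hs
    by_contra hcon
    obtain ⟨v, hαvF⟩ : ∃ v, α v = β s := ⟨α.symm (β s), α.apply_symm_apply (β s)⟩
    have hαv : (α v : ℕ) = (β s : ℕ) := congrArg Fin.val hαvF
    have h1 : v ∉ Y := by
      intro h
      rw [hYc] at h
      exact hcon ⟨by omega, by omega⟩
    have h2 : v ≠ x := by
      intro h
      rw [h, hxa] at hαv
      exact hcon ⟨by omega, by omega⟩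
    have h3 : β v = β s := by rw [hβfix v h1 h2, hαvF]
    have hvs : v = s := β.injective h3
    rw [hvs] at hαv
    rcases hs with hs | hs
    · have hb2 := (hYc s).mp hs
      exact hcon ⟨by omega, by omega⟩
    · subst hs
      exact hcon ⟨by omega, by omega⟩
  have hβx : (β x : ℕ) = c := by
    set v := β.symm ⟨c, hcn⟩ with hv
    have hβv : (β v : ℕ) = c := by rw [hv]; simp
    by_cases h1 : v ∈ Y
    · have h2 := hYX v h1 x rfl
      have h3 := (hβmem x (Or.inr rfl)).2
      rw [Fin.lt_def, hβv] at h2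
      omega
    · by_cases h2 : v = x
      · rw [← h2, hβv]
      · have h3 := hβfix v h1 h2
        have hαv : (α v : ℕ) = c := by rw [← h3]; exact hβv
        exact absurd ((hYc v).mpr ⟨by omega, le_of_eq hαv⟩) h1
  have hβYlt : ∀ y ∈ Y, (β y : ℕ) < c := by
    intro y hy
    have := hYX y hy x rfl
    rw [Fin.lt_def, hβx] at this
    exact this
  have hβY : ∀ y ∈ Y, (β y : ℕ) + 1 = (α y : ℕ) := by
    intro y hy
    have hy1 := (hYc y).mp hy
    have hy2 := hβmem y (Or.inl hy)
    have hy3 := hβYlt y hy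
    have cardA : (Finset.univ.filter (fun v => v ∈ Y ∧ (α v : ℕ) < (α y : ℕ))).card
        = (α y : ℕ) - (a + 1) := by
      rw [← Nat.card_Ico (a + 1) (α y : ℕ)]
      apply Finset.card_bij (fun v _ => (α v : ℕ))
      · intro v hv
        simp only [Finset.mem_filter, Finset.mem_univ, true_and] at hv
        have := (hYc v).mp hv.1
        simp only [Finset.mem_Ico]
        omega
      · intro v1 h1 v2 h2 h
        exact α.injective (Fin.val_injective h)
      · intro p hp
        simp only [Finset.mem_Ico] at hp
        obtain ⟨yp, hyp, he⟩ := hsurjY p hp.1 (by omega)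
        refine ⟨yp, ?_, he⟩
        simp only [Finset.mem_filter, Finset.mem_univ, true_and]
        exact ⟨hyp, by omega⟩
    have cardB : (Finset.univ.filter (fun v => v ∈ Y ∧ (β v : ℕ) < (β y : ℕ))).card
        = (β y : ℕ) - a := by
      rw [← Nat.card_Ico a (β y : ℕ)]
      apply Finset.card_bij (fun v _ => (β v : ℕ))
      · intro v hv
        simp only [Finset.mem_filter, Finset.mem_univ, true_and] at hv
        have := hβmem v (Or.inl hv.1)
        simp only [Finset.mem_Ico]
        omega
      · intro v1 h1 v2 h2 h
        exact β.injective (Fin.val_injective h)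
      · intro p hp
        simp only [Finset.mem_Ico] at hp
        have hpn : p < Fintype.card V := by omega
        set v := β.symm ⟨p, hpn⟩ with hvd
        have hβv : (β v : ℕ) = p := by rw [hvd]; simp
        have hvY : v ∈ Y := by
          by_contra hvY
          by_cases hvx : v = x
          · rw [hvx, hβx] at hβv; omega
          · have h3 := hβfix v hvY hvx
            have hαv : (α v : ℕ) = p := by rw [← h3]; exact hβv
            by_cases hpa : p = a
            · have : v ∈ ({x} : Set V) := (hXc v).mpr ⟨by omega, by omega⟩
              exact hvx (by simpa using this)
            · exact hvY ((hYc v).mpr ⟨by omega, by omega⟩)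
        refine ⟨v, ?_, hβv⟩
        simp only [Finset.mem_filter, Finset.mem_univ, true_and]
        exact ⟨hvY, by omega⟩
    have hsame : (Finset.univ.filter (fun v => v ∈ Y ∧ (β v : ℕ) < (β y : ℕ)))
        = (Finset.univ.filter (fun v => v ∈ Y ∧ (α v : ℕ) < (α y : ℕ))) := by
      ext v
      simp only [Finset.mem_filter, Finset.mem_univ, true_and]
      constructor
      · rintro ⟨h1, h2⟩
        refine ⟨h1, ?_⟩
        have := (hYmono v y h1 hy).mp (by rw [Fin.lt_def]; exact h2)
        rwa [Fin.lt_def] at this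
      · rintro ⟨h1, h2⟩
        refine ⟨h1, ?_⟩
        have := (hYmono v y h1 hy).mpr (by rw [Fin.lt_def]; exact h2)
        rwa [Fin.lt_def] at this
    rw [hsame, cardA] at cardB
    omega
  have hpos1 : ∀ w, (α w : ℕ) ≤ (β w : ℕ) + 1 := by
    intro w
    by_cases h1 : w ∈ Y
    · rw [← hβY w h1]
    · by_cases h2 : w = x
      · rw [h2, hβx, hxa]; omega
      · rw [hβfix w h1 h2]; omega
  have hpos3 : ∀ w, a ≤ (α w : ℕ) → a ≤ (β w : ℕ) := by
    intro w hw
    by_cases h1 : w ∈ Y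
    · exact (hβmem w (Or.inl h1)).1
    · by_cases h2 : w = x
      · rw [h2, hβx]; omega
      · rw [hβfix w h1 h2]; exact hw
  have L1 : ∀ v, nbhdMin G α v ≤ nbhdMin G β v + 1 := by
    intro v
    obtain ⟨w, hw, hwv⟩ := nbhdMin_spec G β v
    calc nbhdMin G α v ≤ (α w : ℕ) := nbhdMin_le G α v w hw
    _ ≤ (β w : ℕ) + 1 := hpos1 w
    _ = nbhdMin G β v + 1 := by rw [hwv]
  have L3 : ∀ v, nbhdMin G α v ≤ a → nbhdMin G α v ≤ nbhdMin G β v := by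
    intro v hva
    obtain ⟨w, hw, hwv⟩ := nbhdMin_spec G β v
    rw [← hwv]
    by_cases h : a ≤ (α w : ℕ)
    · exact le_trans hva (hpos3 w h)
    · push_neg at h
      have h1 : w ∉ Y := by rw [hYc]; omega
      have h2 : w ≠ x := by intro he; rw [he, hxa] at h; omega
      rw [hβfix w h1 h2]
      exact nbhdMin_le G α v w hw
  have L5 : ∀ v, v ∉ Y → v ≠ x →
      (∀ u, (u = v ∨ G.Adj u v) → u ∈ Y → nbhdMin G α v ≠ (α u : ℕ)) →
      nbhdMin G α v ≤ nbhdMin G β v := by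
    intro v h1 h2 hne
    obtain ⟨w, hw, hwv⟩ := nbhdMin_spec G β v
    rw [← hwv]
    by_cases hwY : w ∈ Y
    · have ha1 : nbhdMin G α v ≤ (α w : ℕ) := nbhdMin_le G α v w hw
      have ha2 := hne w hw hwY
      have ha3 := hβY w hwY
      omega
    · by_cases hwx : w = x
      · have ha1 : nbhdMin G α v ≤ (α w : ℕ) := nbhdMin_le G α v w hw
        rw [hwx, hβx]
        rw [hwx, hxa] at ha1
        omega
      · rw [hβfix w hwY hwx]
        exact nbhdMin_le G α v w hw
  have hzx : z ≠ x := hz.ne'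
  have hNz : ∀ w, G.Adj w z → w = x := by
    intro w hw
    obtain ⟨u, hu⟩ := Set.ncard_eq_one.mp hzdeg
    have hxu : x ∈ G.neighborSet z := (SimpleGraph.mem_neighborSet G z x).mpr hz.symm
    have hwu : w ∈ G.neighborSet z := (SimpleGraph.mem_neighborSet G z w).mpr hw.symm
    rw [hu] at hxu hwu
    simp only [Set.mem_singleton_iff] at hxu hwu
    rw [hwu, hxu]
  have hαzc : c < (α z : ℕ) := by
    obtain ⟨yc, hyc, hycv⟩ := hsurjY c (by omega) le_rfl
    have := hzafter yc hyc
    rw [Fin.lt_def] at this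
    omega
  have hzY : z ∉ Y := by rw [hYc]; omega
  have hβz : (β z : ℕ) = (α z : ℕ) := by rw [hβfix z hzY hzx]
  have mAz : nbhdMin G α z = a := by
    apply le_antisymm
    · have := nbhdMin_le G α z x (Or.inr hz)
      rwa [hxa] at this
    · obtain ⟨w, hw, hwv⟩ := nbhdMin_spec G α z
      rw [← hwv]
      rcases hw with hw | hw
      · rw [hw]; omega
      · rw [hNz w hw, hxa]
  have mBz : nbhdMin G β z = c := by
    apply le_antisymm
    · have := nbhdMin_le G β z x (Or.inr hz)
      rwa [hβx] at this
    · obtain ⟨w, hw, hwv⟩ := nbhdMin_spec G β z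
      rw [← hwv]
      rcases hw with hw | hw
      · rw [hw, hβz]; omega
      · rw [hNz w hw, hβx]
  set P : V → ℤ := fun v => (vtxProfile G β v : ℤ) - (vtxProfile G α v : ℤ) with hPdef
  have Pval : ∀ v, P v = ((β v : ℕ) : ℤ) - (nbhdMin G β v : ℤ)
      - ((α v : ℕ) : ℤ) + (nbhdMin G α v : ℤ) := by
    intro v
    simp only [hPdef, vtxProfile_cast]
    ring
  have Px : P x ≤ (c : ℤ) - a := by
    have h1 : nbhdMin G α x ≤ nbhdMin G β x :=
      L3 x (by rw [← hxa]; exact nbhdMin_le_self G α x)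
    rw [Pval x, hβx, hxa]
    omega
  have Pz : P z = (a : ℤ) - c := by
    rw [Pval z, hβz, mAz, mBz]
    ring
  have PY : ∀ y ∈ Y, P y ≤ 0 := by
    intro y hy
    have h1 := L1 y
    have h2 := hβY y hy
    rw [Pval y]
    omega
  have PL : ∀ y ∈ Y, nbhdMin G α y ≤ a → P y ≤ -1 := by
    intro y hy hya
    have h1 := L3 y hya
    have h2 := hβY y hy
    rw [Pval y]
    omega
  have Prest0 : ∀ v, v ∉ Y → v ≠ x →
      (∀ u, (u = v ∨ G.Adj u v) → u ∈ Y → nbhdMin G α v ≠ (α u : ℕ)) → P v ≤ 0 := by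
    intro v h1 h2 h3
    have h4 := L5 v h1 h2 h3
    rw [Pval v, hβfix v h1 h2]
    omega
  have Prest1 : ∀ v, v ∉ Y → v ≠ x → P v ≤ 1 := by
    intro v h1 h2
    have h4 := L1 v
    rw [Pval v, hβfix v h1 h2]
    omega
  set Tset : Finset V := Finset.univ.filter (fun v => v ∈ Y) with hTdef
  set Lset : Finset V := Finset.univ.filter (fun y => y ∈ Y ∧ nbhdMin G α y ≤ a) with hLdef
  set Rset : Finset V := Finset.univ.filter
      (fun v => v ∉ Y ∧ v ≠ x ∧ v ≠ z ∧
        ∃ u ∈ Y, (u = v ∨ G.Adj u v) ∧ nbhdMin G α v = (α u : ℕ)) with hRdef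
  have hxzne : x ≠ z := hz.ne
  have hxT : x ∉ Tset := by simp [hTdef, hxY]
  have hzT : z ∉ Tset := by simp [hTdef, hzY]
  set A : Finset V := insert x (insert z Tset) with hAdef
  have hsumA : ∑ v ∈ A, P v = P x + (P z + ∑ v ∈ Tset, P v) := by
    rw [hAdef, Finset.sum_insert (by simp [hxzne, hxT]), Finset.sum_insert hzT]
  have hsplit : ∑ v, P v = (∑ v ∈ Finset.univ \ A, P v) + (∑ v ∈ A, P v) :=
    (Finset.sum_sdiff (Finset.subset_univ A)).symm
  have hLsub : Lset ⊆ Tset := by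
    intro y hy
    simp only [hLdef, Finset.mem_filter, Finset.mem_univ, true_and] at hy
    simp only [hTdef, Finset.mem_filter, Finset.mem_univ, true_and]
    exact hy.1
  have hTbound : ∑ v ∈ Tset, P v ≤ -(Lset.card : ℤ) := by
    calc ∑ v ∈ Tset, P v ≤ ∑ v ∈ Tset, (if v ∈ Lset then (-1 : ℤ) else 0) := by
          apply Finset.sum_le_sum
          intro y hyT
          have hyY : y ∈ Y := by
            simpa only [hTdef, Finset.mem_filter, Finset.mem_univ, true_and] using hyT
          by_cases hyL : y ∈ Lset
          · have hy2 : y ∈ Y ∧ nbhdMin G α y ≤ a := by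
              simpa only [hLdef, Finset.mem_filter, Finset.mem_univ, true_and] using hyL
            rw [if_pos hyL]
            exact PL y hyY hy2.2
          · rw [if_neg hyL]
            exact PY y hyY
      _ = ∑ v ∈ Tset ∩ Lset, (-1 : ℤ) := Finset.sum_ite_mem _ _ _
      _ = -(Lset.card : ℤ) := by rw [Finset.inter_eq_right.mpr hLsub]; simp
  have hRsub : Rset ⊆ Finset.univ \ A := by
    intro v hv
    simp only [hRdef, Finset.mem_filter, Finset.mem_univ, true_and] at hv
    simp only [Finset.mem_sdiff, Finset.mem_univ, true_and, hAdef, Finset.mem_insert,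
      hTdef, Finset.mem_filter]
    push_neg
    exact ⟨hv.2.1, hv.2.2.1, hv.1⟩
  have hRbound : ∑ v ∈ Finset.univ \ A, P v ≤ (Rset.card : ℤ) := by
    calc ∑ v ∈ Finset.univ \ A, P v
        ≤ ∑ v ∈ Finset.univ \ A, (if v ∈ Rset then (1 : ℤ) else 0) := by
          apply Finset.sum_le_sum
          intro v hv
          rw [Finset.mem_sdiff] at hv
          have hvA := hv.2
          have hvx : v ≠ x := by rintro rfl; exact hvA (by simp [hAdef])
          have hvz : v ≠ z := by rintro rfl; exact hvA (by simp [hAdef])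
          have hvY : v ∉ Y := by
            intro h
            exact hvA (by simp [hAdef, hTdef, h])
          by_cases hvR : v ∈ Rset
          · rw [if_pos hvR]; exact Prest1 v hvY hvx
          · rw [if_neg hvR]
            apply Prest0 v hvY hvx
            intro u hu huY hemin
            apply hvR
            simp only [hRdef, Finset.mem_filter, Finset.mem_univ, true_and]
            exact ⟨hvY, hvx, hvz, u, huY, hu, hemin⟩
      _ = ∑ v ∈ (Finset.univ \ A) ∩ Rset, (1 : ℤ) := Finset.sum_ite_mem _ _ _
      _ = (Rset.card : ℤ) := by rw [Finset.inter_eq_right.mpr hRsub]; simp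
  have hfinR : (Eright G α Y).Finite := Set.toFinite _
  have hfinL : (Eleft G α Y).Finite := Set.toFinite _
  have cardR : Rset.card ≤ (Eright G α Y).ncard := by
    rw [Set.ncard_eq_toFinset_card _ hfinR]
    apply Finset.card_le_card_of_injOn
        (fun v => ((α.symm ⟨nbhdMin G α v,
          lt_of_le_of_lt (nbhdMin_le_self G α v) (α v).2⟩ : V), v))
    · intro v hv
      simp only [Finset.mem_coe, hRdef, Finset.mem_filter, Finset.mem_univ, true_and] at hv
      obtain ⟨hvY, hvx, hvz, u, huY, hu, heq⟩ := hv
      have huv : u ≠ v := fun h => hvY (h ▸ huY)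
      have hadj : G.Adj u v := hu.resolve_left huv
      have hsymm : (α.symm ⟨nbhdMin G α v,
          lt_of_le_of_lt (nbhdMin_le_self G α v) (α v).2⟩ : V) = u := by
        rw [Equiv.symm_apply_eq]
        exact Fin.val_injective heq
      rw [Finset.mem_coe, Set.Finite.mem_toFinset]
      simp only [Eright, Set.mem_setOf_eq]
      rw [hsymm]
      have h1 : (α u : ℕ) ≤ (α v : ℕ) := by rw [← heq]; exact nbhdMin_le_self G α v
      have h2 : (α u : ℕ) ≠ (α v : ℕ) := fun h => huv (α.injective (Fin.val_injective h))
      exact ⟨⟨hadj, Or.inl heq.symm⟩, huY, hvY, lt_of_le_of_ne h1 h2⟩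
    · intro v1 h1 v2 h2 he
      exact congrArg Prod.snd he
  have hkeyL : ∀ p : V × V, p ∈ Eleft G α Y → (α p.2 : ℕ) = nbhdMin G α p.1 := by
    intro p hp
    simp only [Eleft, memEalpha, Set.mem_setOf_eq] at hp
    obtain ⟨⟨hadj, hdisj⟩, hp1, hp2, hlt⟩ := hp
    rcases hdisj with h | h
    · have := nbhdMin_le_self G α p.2
      omega
    · exact h
  have cardL : (Eleft G α Y).ncard ≤ Lset.card := by
    rw [Set.ncard_eq_toFinset_card _ hfinL]
    apply Finset.card_le_card_of_injOn (fun p => p.1)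
    · intro p hp
      rw [Finset.mem_coe, Set.Finite.mem_toFinset] at hp
      have hd := hkeyL p hp
      simp only [Eleft, memEalpha, Set.mem_setOf_eq] at hp
      obtain ⟨⟨hadj, hdisj⟩, hp1, hp2, hlt⟩ := hp
      have hc1 := (hYc p.1).mp hp1
      have hc2 : (α p.2 : ℕ) ≤ a := by
        by_contra hcon
        push_neg at hcon
        exact hp2 ((hYc p.2).mpr ⟨hcon, by omega⟩)
      simp only [Finset.mem_coe, hLdef, Finset.mem_filter, Finset.mem_univ, true_and]
      exact ⟨hp1, by omega⟩
    · intro p hp q hq he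
      simp only [Finset.mem_coe, Set.Finite.mem_toFinset] at hp hq
      have hdp := hkeyL p hp
      have hdq := hkeyL q hq
      have h1 : (α p.2 : ℕ) = (α q.2 : ℕ) := by
        simp only at he
        rw [hdp, hdq, he]
      have h2 : p.2 = q.2 := α.injective (Fin.val_injective h1)
      exact Prod.ext he h2
  have hRL : (Rset.card : ℤ) ≤ (Lset.card : ℤ) := by
    exact_mod_cast le_trans cardR (le_trans hY cardL)
  have hsum : ∑ v, P v ≤ 0 := by
    rw [hsplit, hsumA]
    linarith [hTbound, hRbound, Px, Pz, hRL]
  have hPsum : ∑ v, P v = (∑ v : V, (vtxProfile G β v : ℤ))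
      - ∑ v : V, (vtxProfile G α v : ℤ) := by
    simp only [hPdef]
    rw [Finset.sum_sub_distrib]
  have hfinal : (ordProfile G β : ℤ) ≤ (ordProfile G α : ℤ) := by
    rw [ordProfile, ordProfile]
    push_cast
    rw [hPsum] at hsum
    linarith
  exact_mod_cast hfinal
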